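/- arXiv:math/0702686 — 4 statements merged into one kernel-verified Lean document; each statement's English description precedes it below -/
import Mathlib

section
/- Let T be a compact metric space and (ξ_k)_{k≥1} a sequence of independent standard normal random variables on a probability space (Ω, F, P). Let (f_k)_{k≥1} be continuous real-valued functions on T such that the partial sum processes W_N(t) = Σ_{k=1}^N ξ_k f_k(t) converge, almost surely uniformly in t ∈ T, to a limit process W(t), and moreover E[sup_{t∈T} |W_N(t) − W(t)|²] → 0 as N → ∞. Let (a_k)_{k≥1} be real numbers such that the series Σ_{k=1}^∞ a_k f_k(t) converges uniformly on T to a function w(t). Then for every ε > 0, P(sup_{t∈T} |W(t) − w(t)| < ε) > 0. -/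
/-!
Fix `δ = ε / 4` and `N` so large that the `N`-th deterministic partial sum is `δ`-close to `w`.
Almost surely the random partial sums are uniformly Cauchy, so for some such `N` the event that
every tail sum `∑_{N ≤ k < M} ξ k f k` is at most `δ` on a countable dense set has positive
probability. This event depends only on `(ξ k)_{k ≥ N}` (which is why it is phrased through the
series rather than through `W`, which need not be measurable), and on it `W` is `δ`-close to the
`N`-th random partial sum. The event `|ξ k - a k| < η` for all `k < N` has positive probability
because Gaussian laws charge open sets, and it is independent of the tail event. On the
intersection, `W` is within `3δ < ε` of `w`.
-/

open MeasureTheory ProbabilityTheory Filter Finset Metric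

lemma measure_preimage_ne_zero_of_map_eq_gaussianReal {Ω : Type*} [MeasurableSpace Ω]
    {P : Measure Ω} {X : Ω → ℝ} (hX : Measurable X) {μ : ℝ} {v : NNReal}
    (hXlaw : P.map X = gaussianReal μ v) (hv : v ≠ 0) {s : Set ℝ} (hs : IsOpen s)
    (hne : s.Nonempty) : P (X ⁻¹' s) ≠ 0 := by
  rw [← Measure.map_apply hX hs.measurableSet, hXlaw]
  exact fun h => hs.measure_ne_zero volume hne (gaussianReal_absolutelyContinuous' μ hv h)

lemma frequently_measure_ne_zero_of_ae_eventually_mem {Ω ι : Type*} [MeasurableSpace Ω]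
    {μ : Measure Ω} [NeZero μ] [Countable ι] {l : Filter ι} [l.NeBot] {s : ι → Set Ω}
    (h : ∀ᵐ ω ∂μ, ∀ᶠ n in l, ω ∈ s n) : ∃ᶠ n in l, μ (s n) ≠ 0 := by
  intro hnull
  have hnotMem : ∀ᵐ ω ∂μ, ∀ n, μ (s n) = 0 → ω ∉ s n := ae_all_iff.2 fun n => by
    by_cases hn : μ (s n) = 0
    · filter_upwards [measure_eq_zero_iff_ae_notMem.1 hn] with ω hω _ using hω
    · exact Eventually.of_forall fun _ h => absurd h hn
  have hfalse : ∀ᵐ ω ∂μ, False := by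
    filter_upwards [h, hnotMem] with ω hmem hnot
    obtain ⟨n, hn, hzero⟩ := (hmem.and (hnull.mono fun _ h => not_not.1 h)).exists
    exact hnot n hzero hn
  exact NeZero.ne μ (ae_eq_bot.1 (eventually_false_iff_eq_bot.1 hfalse))

lemma eventually_forall_abs_sum_Ico_le {T : Type*} {g : ℕ → T → ℝ} {F : T → ℝ}
    (h : TendstoUniformly (fun N t => ∑ k ∈ range N, g k t) F atTop) {δ : ℝ} (hδ : 0 < δ) :
    ∀ᶠ N in atTop, ∀ M, N ≤ M → ∀ t, |∑ k ∈ Ico N M, g k t| ≤ δ := by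
  obtain ⟨q, hq⟩ := eventually_atTop.1 (Metric.tendstoUniformly_iff.1 h (δ / 2) (by positivity))
  refine eventually_atTop.2 ⟨q, fun N hN M hM t => ?_⟩
  have hM' := hq M (hN.trans hM) t
  have hN' := hq N hN t
  rw [Real.dist_eq] at hM' hN'
  rw [sum_Ico_eq_sub _ hM]
  calc |∑ k ∈ range M, g k t - ∑ k ∈ range N, g k t|
      ≤ |∑ k ∈ range M, g k t - F t| + |F t - ∑ k ∈ range N, g k t| := abs_sub_le _ _ _
    _ ≤ δ := by rw [abs_sub_comm]; linarith

lemma abs_sub_sum_range_le_of_forall_mem_dense {T : Type*} [TopologicalSpace T] {D : Set T}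
    (hD : Dense D) {g : ℕ → T → ℝ} (hg : ∀ k, Continuous (g k)) {F : T → ℝ}
    (hF : TendstoUniformly (fun N t => ∑ k ∈ range N, g k t) F atTop) {N : ℕ} {δ : ℝ}
    (htail : ∀ M, N ≤ M → ∀ x ∈ D, |∑ k ∈ Ico N M, g k x| ≤ δ) (t : T) :
    |F t - ∑ k ∈ range N, g k t| ≤ δ := by
  have hS : ∀ M, Continuous fun t => ∑ k ∈ range M, g k t := fun M => by fun_prop
  refine hD.induction (P := fun t => |F t - ∑ k ∈ range N, g k t| ≤ δ) (fun x hx => ?_)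
    (isClosed_le (((hF.continuous (Frequently.of_forall hS)).sub (hS N)).abs) continuous_const) t
  refine le_of_tendsto ((hF.tendsto_at x).sub_const _).abs
    (eventually_atTop.2 ⟨N, fun M hM => ?_⟩)
  rw [← sum_Ico_eq_sub _ hM]
  exact htail M hM x hx

lemma exists_pos_forall_abs_sum_mul_sub_le {T : Type*} [TopologicalSpace T] [CompactSpace T]
    {f : ℕ → T → ℝ} (hf : ∀ k, Continuous (f k)) (N : ℕ) {δ : ℝ} (hδ : 0 < δ) :
    ∃ η > 0, ∀ x a : ℕ → ℝ, (∀ k < N, |x k - a k| < η) →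
      ∀ t, |∑ k ∈ range N, x k * f k t - ∑ k ∈ range N, a k * f k t| ≤ δ := by
  obtain ⟨C, hC⟩ := isCompact_univ.exists_bound_of_continuousOn
    (f := fun t => ∑ k ∈ range N, |f k t|) (by fun_prop)
  refine ⟨δ / (|C| + 1), by positivity, fun x a hxa t => ?_⟩
  have hCt : ∑ k ∈ range N, |f k t| ≤ |C| + 1 :=
    (le_abs_self _).trans ((hC t trivial).trans ((le_abs_self C).trans (by linarith)))
  calc |∑ k ∈ range N, x k * f k t - ∑ k ∈ range N, a k * f k t|
      = |∑ k ∈ range N, (x k - a k) * f k t| := by simp only [← sum_sub_distrib, sub_mul]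
    _ ≤ ∑ k ∈ range N, |x k - a k| * |f k t| := by
        simpa only [abs_mul] using abs_sum_le_sum_abs (fun k => (x k - a k) * f k t) (range N)
    _ ≤ ∑ k ∈ range N, δ / (|C| + 1) * |f k t| :=
        sum_le_sum fun k hk => by gcongr; exact (hxa k (mem_range.1 hk)).le
    _ = δ / (|C| + 1) * ∑ k ∈ range N, |f k t| := (mul_sum ..).symm
    _ ≤ δ / (|C| + 1) * (|C| + 1) := by gcongr
    _ = δ := div_mul_cancel₀ _ (by positivity)

def tailSumsBoundedOn {Ω T : Type*} (ξ : ℕ → Ω → ℝ) (f : ℕ → T → ℝ) (D : Set T) (δ : ℝ)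
    (N : ℕ) : Set Ω :=
  {ω | ∀ M, N ≤ M → ∀ x ∈ D, |∑ k ∈ Ico N M, ξ k ω * f k x| ≤ δ}

lemma measurableSet_tailSumsBoundedOn {Ω T : Type*} (ξ : ℕ → Ω → ℝ) (f : ℕ → T → ℝ)
    {D : Set T} (hD : D.Countable) (δ : ℝ) (N : ℕ) :
    MeasurableSet[⨆ k ∈ (↑(range N) : Set ℕ)ᶜ, MeasurableSpace.comap (ξ k) inferInstance]
      (tailSumsBoundedOn ξ f D δ N) := by
  let _ : MeasurableSpace Ω :=
    ⨆ k ∈ (↑(range N) : Set ℕ)ᶜ, MeasurableSpace.comap (ξ k) inferInstance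
  have hξ : ∀ k, N ≤ k → Measurable (ξ k) := fun k hk =>
    (comap_measurable (ξ k)).mono (le_biSup (fun k => MeasurableSpace.comap (ξ k) inferInstance)
      (by simpa using hk)) le_rfl
  simp only [tailSumsBoundedOn, Set.ofPred_forall]
  refine .iInter fun M => .iInter fun hM => .biInter hD fun x _ =>
    measurableSet_le ?_ measurable_const
  exact (Finset.measurable_sum _ fun k hk => (hξ k (mem_Ico.1 hk).1).mul_const _).abs

lemma measure_biInter_preimage_inter_ne_zero {Ω ι β : Type*} [MeasurableSpace Ω]
    [MeasurableSpace β] {P : Measure Ω} {ξ : ι → Ω → β} (hmeas : ∀ k, Measurable (ξ k))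
    (hindep : iIndepFun ξ P) {S : Finset ι} {s : ι → Set β} (hs : ∀ k ∈ S, MeasurableSet (s k))
    (hpos : ∀ k ∈ S, P (ξ k ⁻¹' s k) ≠ 0) {E : Set Ω}
    (hE : MeasurableSet[⨆ k ∈ (↑S : Set ι)ᶜ, MeasurableSpace.comap (ξ k) inferInstance] E)
    (hE0 : P E ≠ 0) : P ((⋂ k ∈ S, ξ k ⁻¹' s k) ∩ E) ≠ 0 := by
  have hsk : ∀ k ∈ S, MeasurableSet[MeasurableSpace.comap (ξ k) inferInstance] (ξ k ⁻¹' s k) :=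
    fun k hk => ⟨s k, hs k hk, rfl⟩
  have hA : MeasurableSet[⨆ k ∈ (↑S : Set ι), MeasurableSpace.comap (ξ k) inferInstance]
      (⋂ k ∈ S, ξ k ⁻¹' s k) :=
    Finset.measurableSet_biInter S fun k hk =>
      le_biSup (fun k => MeasurableSpace.comap (ξ k) inferInstance) (mem_coe.2 hk) _ (hsk k hk)
  rw [(Indep_iff _ _ _).1 (indep_biSup_compl (fun k => (hmeas k).comap_le) hindep.iIndep ↑S)
    _ _ hA hE, hindep.meas_biInter hsk]
  exact mul_ne_zero (prod_ne_zero_iff.2 hpos) hE0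

theorem gaussian_process_uniform_ball_positive_general
    {T : Type*} [MetricSpace T] [CompactSpace T]
    {Ω : Type*} [MeasurableSpace Ω] (P : Measure Ω) [IsProbabilityMeasure P]
    (ξ : ℕ → Ω → ℝ) (hmeas : ∀ k, Measurable (ξ k))
    (hindep : iIndepFun ξ P)
    (hgauss : ∀ k, Measure.map (ξ k) P = gaussianReal 0 1)
    (f : ℕ → T → ℝ) (hf : ∀ k, Continuous (f k))
    (W : Ω → T → ℝ)
    (hWconv : ∀ᵐ ω ∂P, TendstoUniformly
      (fun N t => ∑ k ∈ Finset.range N, ξ k ω * f k t) (W ω) atTop)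
    (a : ℕ → ℝ) (w : T → ℝ)
    (hw : TendstoUniformly (fun N t => ∑ k ∈ Finset.range N, a k * f k t) w atTop) :
    ∀ ε > 0, 0 < P {ω | (⨆ t, |W ω t - w t|) < ε} := by
  intro ε hε
  obtain ⟨D, hDc, hDd⟩ := TopologicalSpace.exists_countable_dense T
  have hδ : 0 < ε / 4 := by positivity
  obtain ⟨N₀, hN₀⟩ := eventually_atTop.1 (Metric.tendstoUniformly_iff.1 hw _ hδ)
  have htail : ∃ᶠ N in atTop, P (tailSumsBoundedOn ξ f D (ε / 4) N) ≠ 0 :=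
    frequently_measure_ne_zero_of_ae_eventually_mem <| hWconv.mono fun ω hω =>
      (eventually_forall_abs_sum_Ico_le hω hδ).mono fun N hN M hM x _ => hN M hM x
  obtain ⟨N, hNtail, hN⟩ := (htail.and_eventually (eventually_ge_atTop N₀)).exists
  obtain ⟨η, hη, hclose⟩ := exists_pos_forall_abs_sum_mul_sub_le hf N hδ
  have hgood := measure_biInter_preimage_inter_ne_zero hmeas hindep
    (s := fun k => ball (a k) η) (fun _ _ => measurableSet_ball)
    (fun k _ => measure_preimage_ne_zero_of_map_eq_gaussianReal (hmeas k) (hgauss k) one_ne_zero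
      isOpen_ball (nonempty_ball.2 hη))
    (measurableSet_tailSumsBoundedOn ξ f hDc _ N) hNtail
  refine (pos_iff_ne_zero.2 hgood).trans_le (measure_mono_ae ?_)
  filter_upwards [hWconv] with ω hω ⟨hωball, hωtail⟩
  refine (Real.iSup_le (fun t => ?_) (by positivity : 0 ≤ 3 * (ε / 4))).trans_lt (by linarith)
  have hWS := abs_sub_sum_range_le_of_forall_mem_dense hDd
    (g := fun k t => ξ k ω * f k t) (fun k => continuous_const.mul (hf k)) hω hωtail t
  have hSa := hclose (ξ · ω) a (fun k hk => by
    simpa [Real.dist_eq] using Set.mem_iInter₂.1 hωball k (mem_range.2 hk)) t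
  have hSw := hN₀ N hN t
  have htri := dist_triangle4 (W ω t) (∑ k ∈ range N, ξ k ω * f k t)
    (∑ k ∈ range N, a k * f k t) (w t)
  rw [dist_comm] at hSw
  simp only [Real.dist_eq] at htri hSw
  linarith

/-- Theorem 4 (Karhunen–Loève form): a Gaussian process given by a random series
assigns positive probability to every uniform neighborhood of a function that is a
uniform limit of the corresponding deterministic series. -/
theorem gaussian_process_uniform_ball_positive
    {T : Type*} [MetricSpace T] [CompactSpace T] [Nonempty T]
    {Ω : Type*} [MeasurableSpace Ω] (P : Measure Ω) [IsProbabilityMeasure P]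
    (ξ : ℕ → Ω → ℝ) (hmeas : ∀ k, Measurable (ξ k))
    (hindep : iIndepFun ξ P)
    (hgauss : ∀ k, Measure.map (ξ k) P = gaussianReal 0 1)
    (f : ℕ → T → ℝ) (hf : ∀ k, Continuous (f k))
    (W : Ω → T → ℝ)
    (hWconv : ∀ᵐ ω ∂P, TendstoUniformly
      (fun N t => ∑ k ∈ Finset.range N, ξ k ω * f k t) (W ω) atTop)
    (hL2 : Tendsto
      (fun N => ∫ ω, (⨆ t, |(∑ k ∈ Finset.range N, ξ k ω * f k t) - W ω t|) ^ 2 ∂P)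
      atTop (nhds 0))
    (a : ℕ → ℝ) (w : T → ℝ)
    (hw : TendstoUniformly (fun N t => ∑ k ∈ Finset.range N, a k * f k t) w atTop) :
    ∀ ε > 0, 0 < P {ω | (⨆ t, |W ω t - w t|) < ε} :=
  gaussian_process_uniform_ball_positive_general P ξ hmeas hindep hgauss f hf W hWconv a w hw
end

section
/- Let 𝔛 ⊂ ℝ^d be a compact convex set and let σ : ℝ^d × ℝ^d → ℝ be a symmetric function, i.e., σ(s, t) = σ(t, s) for all s, t, which has continuous partial derivatives up to total order 4 on an open neighborhood of 𝔛 × 𝔛. Fix j ∈ {1, …, d} and let g(s, t) = ∂²σ(s, t)/∂s_j ∂t_j. Then there exists a constant C such that g(s, s) + g(t, t) − 2 g(s, t) ≤ C ‖s − t‖² for all s, t ∈ 𝔛, where ‖·‖ is the Euclidean norm. -/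
open ContinuousLinearMap

private abbrev Eu (d : ℕ) : Type := EuclideanSpace ℝ (Fin d)

private theorem hasFDerivAt_comp' {E F G' : Type*} [NormedAddCommGroup E] [NormedSpace ℝ E]
    [NormedAddCommGroup F] [NormedSpace ℝ F] [NormedAddCommGroup G'] [NormedSpace ℝ G']
    {g : F → G'} {f : E → F} {g' : F →L[ℝ] G'} {f' : E →L[ℝ] F} {x : E}
    (hg : HasFDerivAt g g' (f x)) (hf : HasFDerivAt f f' x) :
    HasFDerivAt (fun x => g (f x)) (g'.comp f') x := hg.comp x hf

private lemma seg_norm_bound {E : Type*} [NormedAddCommGroup E] [NormedSpace ℝ E]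
    {a b x : E} (hx : x ∈ segment ℝ a b) : ‖x - a‖ ≤ ‖b - a‖ := by
  obtain ⟨u, v, hu, hv, huv, rfl⟩ := hx
  have hu' : u = 1 - v := by linarith
  have h : u • a + v • b - a = v • (b - a) := by
    subst hu'; module
  rw [h, norm_smul, Real.norm_eq_abs, abs_of_nonneg hv]
  exact mul_le_of_le_one_left (norm_nonneg _) (by linarith)

set_option maxHeartbeats 2000000 in
/-- The Taylor-expansion bound (4.4) inside Theorem 5: for a symmetric covariance kernel
with continuous partial derivatives up to total order 4 on a neighborhood of 𝔛 × 𝔛,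
the intrinsic semimetric of the j-th partial-derivative process, namely
σ*(s,t) = g(s,s) + g(t,t) - 2 g(s,t) with g = ∂²σ/∂s_j∂t_j, is dominated by a constant
multiple of the squared Euclidean distance on the compact convex set 𝔛. -/
theorem derivative_process_intrinsic_semimetric_bound
    {d : ℕ} (𝔛 : Set (EuclideanSpace ℝ (Fin d)))
    (hcomp : IsCompact 𝔛) (hconv : Convex ℝ 𝔛)
    (σ : EuclideanSpace ℝ (Fin d) × EuclideanSpace ℝ (Fin d) → ℝ)
    (hsymm : ∀ s t, σ (s, t) = σ (t, s))
    (U : Set (EuclideanSpace ℝ (Fin d) × EuclideanSpace ℝ (Fin d)))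
    (hU : IsOpen U) (hXU : 𝔛 ×ˢ 𝔛 ⊆ U)
    (hsmooth : ContDiffOn ℝ 4 σ U)
    (j : Fin d)
    (g : EuclideanSpace ℝ (Fin d) → EuclideanSpace ℝ (Fin d) → ℝ)
    (hg : ∀ s t, g s t = fderiv ℝ
      (fun s' => fderiv ℝ (fun t' => σ (s', t')) t (EuclideanSpace.single j 1))
      s (EuclideanSpace.single j 1)) :
    ∃ C : ℝ, ∀ s ∈ 𝔛, ∀ t ∈ 𝔛, g s s + g t t - 2 * g s t ≤ C * ‖s - t‖ ^ 2 := by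
  classical
  set e : (Eu d) := EuclideanSpace.single j 1 with he
  -- basic differentiability facts
  have hU4 : ∀ p ∈ U, ContDiffAt ℝ 4 σ p := fun p hp =>
    (hsmooth p hp).contDiffAt (hU.mem_nhds hp)
  have hσdiff : ∀ p ∈ U, DifferentiableAt ℝ σ p := fun p hp =>
    (hU4 p hp).differentiableAt (by norm_num)
  set F : (Eu d) × (Eu d) → ((Eu d) × (Eu d)) →L[ℝ] ℝ := fderiv ℝ σ with hFdef
  have hF3 : ContDiffOn ℝ 3 F U := hsmooth.fderiv_of_isOpen hU (by norm_num)
  have hFdiff : ∀ p ∈ U, DifferentiableAt ℝ F p := fun p hp =>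
    ((hF3 p hp).contDiffAt (hU.mem_nhds hp)).differentiableAt (by norm_num)
  set F2 : (Eu d) × (Eu d) → ((Eu d) × (Eu d)) →L[ℝ] ((Eu d) × (Eu d)) →L[ℝ] ℝ := fderiv ℝ F with hF2def
  have hF2C : ContDiffOn ℝ 2 F2 U := hF3.fderiv_of_isOpen hU (by norm_num)
  set G : (Eu d) × (Eu d) → ℝ := fun p => F2 p (e, 0) (0, e) with hGdef
  have hGC : ContDiffOn ℝ 2 G U :=
    (hF2C.clm_apply contDiffOn_const).clm_apply contDiffOn_const
  have hGdiff : ∀ p ∈ U, DifferentiableAt ℝ G p := fun p hp =>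
    ((hGC p hp).contDiffAt (hU.mem_nhds hp)).differentiableAt (by norm_num)
  -- identification of g with G on U
  have hgG : ∀ s t : (Eu d), (s, t) ∈ U → g s t = G (s, t) := by
    intro s t hst
    have hinner : ∀ s' : (Eu d), (s', t) ∈ U →
        fderiv ℝ (fun t' => σ (s', t')) t = (F (s', t)).comp (inr ℝ (Eu d) (Eu d)) := by
      intro s' hs'
      exact (((hσdiff _ hs').hasFDerivAt).comp t (hasFDerivAt_prodMk_right s' t)).fderiv
    have hopen : IsOpen {s' : (Eu d) | (s', t) ∈ U} := hU.preimage (Continuous.prodMk_left t)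
    have heq : (fun s' => fderiv ℝ (fun t' => σ (s', t')) t e)
        =ᶠ[nhds s] fun s' => F (s', t) (0, e) := by
      filter_upwards [hopen.mem_nhds hst] with s' hs'
      rw [hinner s' hs']
      rfl
    have houter : HasFDerivAt (fun s' => F (s', t) (0, e))
        ((ContinuousLinearMap.apply ℝ ℝ ((0 : (Eu d)), e)).comp
          ((fderiv ℝ F (s, t)).comp (inl ℝ (Eu d) (Eu d)))) s :=
      ((ContinuousLinearMap.apply ℝ ℝ ((0 : (Eu d)), e)).hasFDerivAt).comp s
        (((hFdiff _ hst).hasFDerivAt).comp s (hasFDerivAt_prodMk_left s t))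
    rw [hg s t, heq.fderiv_eq, houter.fderiv]
    rfl
  -- the swap map
  set Sw : ((Eu d) × (Eu d)) →L[ℝ] ((Eu d) × (Eu d)) :=
    (ContinuousLinearMap.snd ℝ (Eu d) (Eu d)).prod (ContinuousLinearMap.fst ℝ (Eu d) (Eu d)) with hSwdef
  have hSw : ∀ p : (Eu d) × (Eu d), Sw p = (p.2, p.1) := fun p => rfl
  have hσswap : ∀ p : (Eu d) × (Eu d), σ (Sw p) = σ p := fun ⟨a, b⟩ => hsymm b a
  -- first-order chain rule for the swap
  have hFswap : ∀ p : (Eu d) × (Eu d), p ∈ U → Sw p ∈ U → F p = (F (Sw p)).comp Sw := by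
    intro p hp hps
    have h1 : HasFDerivAt (fun q => σ (Sw q)) ((F (Sw p)).comp Sw) p :=
      ((hσdiff _ hps).hasFDerivAt).comp p Sw.hasFDerivAt
    have h2 : (fun q => σ (Sw q)) = σ := funext hσswap
    rw [h2] at h1
    exact h1.fderiv ▸ rfl
  -- precomposition with Sw as a continuous linear map
  set P : (((Eu d) × (Eu d)) →L[ℝ] ℝ) →L[ℝ] (((Eu d) × (Eu d)) →L[ℝ] ℝ) :=
    (ContinuousLinearMap.compL ℝ ((Eu d) × (Eu d)) ((Eu d) × (Eu d)) ℝ).flip Sw with hPdef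
  have hP : ∀ A : ((Eu d) × (Eu d)) →L[ℝ] ℝ, P A = A.comp Sw := fun A => rfl
  have hUopen2 : IsOpen (U ∩ Sw ⁻¹' U) := hU.inter (hU.preimage Sw.continuous)
  -- second-order chain rule for the swap
  have hF2swap : ∀ s t : (Eu d), (s, t) ∈ U → (t, s) ∈ U →
      F2 (s, t) = P.comp ((F2 (t, s)).comp Sw) := by
    intro s t hst hts
    have hFev : F =ᶠ[nhds ((s, t) : (Eu d) × (Eu d))] fun p => P (F (Sw p)) := by
      filter_upwards [hUopen2.mem_nhds ⟨hst, hts⟩] with p hp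
      rw [hP, hFswap p hp.1 hp.2]
    have hFat : HasFDerivAt F (F2 (t, s)) (Sw ((s, t) : (Eu d) × (Eu d))) := by
      rw [hSw]
      exact (hFdiff _ hts).hasFDerivAt
    have hD : HasFDerivAt (fun p => P (F (Sw p)))
        (P.comp ((F2 (t, s)).comp Sw)) (s, t) :=
      P.hasFDerivAt.comp ((s, t) : (Eu d) × (Eu d)) (hFat.comp _ Sw.hasFDerivAt)
    rw [hF2def, hFev.fderiv_eq, hD.fderiv]
  -- symmetry of G
  have hGsymm : ∀ s t : (Eu d), (s, t) ∈ U → (t, s) ∈ U → G (s, t) = G (t, s) := by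
    intro s t hst hts
    have hsnd : fderiv ℝ (fderiv ℝ σ) (t, s) ((0 : (Eu d)), e) ((e, (0 : (Eu d))))
        = fderiv ℝ (fderiv ℝ σ) (t, s) (e, (0 : (Eu d))) ((0 : (Eu d)), e) :=
      (hU4 _ hts).isSymmSndFDerivAt (by norm_num) _ _
    have h1 : G (s, t) = F2 (t, s) (0, e) (e, 0) := by
      rw [hGdef]
      simp only [hF2swap s t hst hts]
      rfl
    rw [h1]
    exact hsnd
  -- the main function Φ
  set D1 : ((Eu d) × (Eu d)) →L[ℝ] ((Eu d) × (Eu d)) :=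
    (ContinuousLinearMap.fst ℝ (Eu d) (Eu d)).prod (ContinuousLinearMap.fst ℝ (Eu d) (Eu d)) with hD1def
  set D2 : ((Eu d) × (Eu d)) →L[ℝ] ((Eu d) × (Eu d)) :=
    (ContinuousLinearMap.snd ℝ (Eu d) (Eu d)).prod (ContinuousLinearMap.snd ℝ (Eu d) (Eu d)) with hD2def
  set Φ : (Eu d) × (Eu d) → ℝ := fun p => G (D1 p) + G (D2 p) - 2 * G p with hΦdef
  set W : Set ((Eu d) × (Eu d)) := (U ∩ Sw ⁻¹' U) ∩ (D1 ⁻¹' U ∩ D2 ⁻¹' U) with hWdef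
  have hWopen : IsOpen W :=
    hUopen2.inter ((hU.preimage D1.continuous).inter (hU.preimage D2.continuous))
  have hXW : 𝔛 ×ˢ 𝔛 ⊆ W := by
    rintro ⟨a, b⟩ ⟨ha, hb⟩
    exact ⟨⟨hXU ⟨ha, hb⟩, hXU ⟨hb, ha⟩⟩, hXU ⟨ha, ha⟩, hXU ⟨hb, hb⟩⟩
  have hWmem : ∀ p : (Eu d) × (Eu d), p ∈ W →
      (p ∈ U ∧ Sw p ∈ U) ∧ (D1 p ∈ U ∧ D2 p ∈ U) := fun p hp => hp
  have hWU : W ⊆ U := fun p hp => (hWmem p hp).1.1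
  -- Φ is C² on W
  have hΦC : ContDiffOn ℝ 2 Φ W := by
    have h1 : ContDiffOn ℝ 2 (fun p => G (D1 p)) W := by
      have := hGC.comp (D1.contDiff.contDiffOn) (fun p hp => (hWmem p hp).2.1)
      exact this
    have h2 : ContDiffOn ℝ 2 (fun p => G (D2 p)) W := by
      have := hGC.comp (D2.contDiff.contDiffOn) (fun p hp => (hWmem p hp).2.2)
      exact this
    exact (h1.add h2).sub (contDiffOn_const.mul (hGC.mono hWU))
  -- derivative of Φ
  have hΦd : ∀ p ∈ W, HasFDerivAt Φ
      (((fderiv ℝ G (D1 p)).comp D1 + (fderiv ℝ G (D2 p)).comp D2)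
        - (2 : ℝ) • fderiv ℝ G p) p := by
    intro p hp
    have h1 : HasFDerivAt (fun q => G (D1 q)) ((fderiv ℝ G (D1 p)).comp D1) p :=
      ((hGdiff _ (hWmem p hp).2.1).hasFDerivAt).comp p D1.hasFDerivAt
    have h2 : HasFDerivAt (fun q => G (D2 q)) ((fderiv ℝ G (D2 p)).comp D2) p :=
      ((hGdiff _ (hWmem p hp).2.2).hasFDerivAt).comp p D2.hasFDerivAt
    have h3 : HasFDerivAt (fun q => 2 * G q) ((2 : ℝ) • fderiv ℝ G p) p :=
      ((hGdiff _ (hWmem p hp).1.1).hasFDerivAt).const_mul 2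
    exact (h1.add h2).sub h3
  -- the derivative of Φ vanishes on the diagonal
  have hΦdiag0 : ∀ s ∈ 𝔛, fderiv ℝ Φ (s, s) = 0 := by
    intro s hs
    have hsU : ((s, s) : (Eu d) × (Eu d)) ∈ U := hXU ⟨hs, hs⟩
    have hsW : ((s, s) : (Eu d) × (Eu d)) ∈ W := hXW ⟨hs, hs⟩
    have hGswapEv : (fun p => G (Sw p)) =ᶠ[nhds ((s, s) : (Eu d) × (Eu d))] G := by
      filter_upwards [hUopen2.mem_nhds ⟨hsU, hsU⟩] with p hp
      have h1 : ((p.2, p.1) : (Eu d) × (Eu d)) ∈ U := hp.2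
      have h2 : ((p.1, p.2) : (Eu d) × (Eu d)) ∈ U := hp.1
      calc G (Sw p) = G (p.2, p.1) := rfl
        _ = G (p.1, p.2) := hGsymm p.2 p.1 h1 h2
        _ = G p := rfl
    have hGat : HasFDerivAt G (fderiv ℝ G (s, s)) (Sw ((s, s) : (Eu d) × (Eu d))) := by
      rw [hSw]
      exact (hGdiff _ hsU).hasFDerivAt
    have hAswap : fderiv ℝ G (s, s) = (fderiv ℝ G (s, s)).comp Sw := by
      have h1 : HasFDerivAt (fun p => G (Sw p)) ((fderiv ℝ G (s, s)).comp Sw) (s, s) :=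
        hasFDerivAt_comp' hGat Sw.hasFDerivAt
      conv_lhs => rw [← hGswapEv.fderiv_eq]
      exact h1.fderiv
    set A : ((Eu d) × (Eu d)) →L[ℝ] ℝ := fderiv ℝ G (s, s) with hAdef
    have hantidiag : ∀ a : (Eu d), A (a, -a) = 0 := by
      intro a
      have h1 : A (a, -a) = A (-a, a) := by
        conv_lhs => rw [hAswap]
        rfl
      have h2 : ((-a, a) : (Eu d) × (Eu d)) = -((a, -a) : (Eu d) × (Eu d)) := by
        simp [Prod.neg_mk]
      rw [h2, map_neg] at h1
      linarith
    rw [(hΦd _ hsW).fderiv]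
    apply ContinuousLinearMap.ext
    rintro ⟨u, v⟩
    have hval : A (u, u) + A (v, v) - 2 * A (u, v) = A (v - u, u - v) := by
      have h1 : ((u, u) : (Eu d) × (Eu d)) + (v, v) - (2 : ℝ) • ((u, v) : (Eu d) × (Eu d))
          = ((v - u, u - v) : (Eu d) × (Eu d)) := by
        apply Prod.ext <;> simp [two_smul] <;> abel
      rw [← h1, map_sub, map_add, map_smul]
      simp [smul_eq_mul]
    have : A (u, u) + A (v, v) - 2 * A (u, v) = 0 := by
      rw [hval]
      have : ((v - u, u - v) : (Eu d) × (Eu d)) = (v - u, -(v - u)) := by simp [neg_sub]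
      rw [this]
      exact hantidiag (v - u)
    simpa [ContinuousLinearMap.add_apply, ContinuousLinearMap.sub_apply,
      ContinuousLinearMap.smul_apply, ContinuousLinearMap.comp_apply,
      hD1def, hD2def, ContinuousLinearMap.prod_apply, smul_eq_mul] using this
  -- uniform bound on the second derivative of Φ on 𝔛 × 𝔛
  have hΦ1 : ContDiffOn ℝ 1 (fderiv ℝ Φ) W := hΦC.fderiv_of_isOpen hWopen (by norm_num)
  have hcont2 : ContinuousOn (fderiv ℝ (fderiv ℝ Φ)) W :=
    hΦ1.continuousOn_fderiv_of_isOpen hWopen le_rfl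
  obtain ⟨M0, hM0⟩ := (hcomp.prod hcomp).exists_bound_of_continuousOn (f := fderiv ℝ (fderiv ℝ Φ)) (hcont2.mono hXW)
  set M : ℝ := max M0 0 with hMdef
  have hMnn : 0 ≤ M := le_max_right _ _
  refine ⟨M, ?_⟩
  intro s hs t ht
  have hstX : ((s, t) : (Eu d) × (Eu d)) ∈ 𝔛 ×ˢ 𝔛 := ⟨hs, ht⟩
  have hssX : ((s, s) : (Eu d) × (Eu d)) ∈ 𝔛 ×ˢ 𝔛 := ⟨hs, hs⟩
  have hXXconv : Convex ℝ (𝔛 ×ˢ 𝔛 : Set ((Eu d) × (Eu d))) := hconv.prod hconv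
  have hseg : segment ℝ ((s, s) : (Eu d) × (Eu d)) (s, t) ⊆ 𝔛 ×ˢ 𝔛 :=
    hXXconv.segment_subset hssX hstX
  have hd1 : ∀ x ∈ (𝔛 ×ˢ 𝔛 : Set ((Eu d) × (Eu d))), DifferentiableAt ℝ (fderiv ℝ Φ) x := fun x hx =>
    ((hΦ1 x (hXW hx)).contDiffAt (hWopen.mem_nhds (hXW hx))).differentiableAt (by norm_num)
  have hnorm_st : ‖((s, t) : (Eu d) × (Eu d)) - (s, s)‖ = ‖t - s‖ := by
    have : ((s, t) : (Eu d) × (Eu d)) - (s, s) = ((0 : (Eu d)), t - s) := by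
      apply Prod.ext <;> simp
    rw [this, Prod.norm_def]
    simp
  have hbound : ∀ x ∈ segment ℝ ((s, s) : (Eu d) × (Eu d)) (s, t), ‖fderiv ℝ Φ x‖ ≤ M * ‖t - s‖ := by
    intro x hx
    have hx' : x ∈ 𝔛 ×ˢ 𝔛 := hseg hx
    have h1 : ‖fderiv ℝ Φ x - fderiv ℝ Φ (s, s)‖ ≤ M * ‖x - (s, s)‖ :=
      hXXconv.norm_image_sub_le_of_norm_fderiv_le hd1
        (fun y hy => (hM0 y hy).trans (le_max_left _ _)) hssX hx'
    rw [hΦdiag0 s hs, sub_zero] at h1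
    refine h1.trans ?_
    have h2 : ‖x - ((s, s) : (Eu d) × (Eu d))‖ ≤ ‖t - s‖ := (seg_norm_bound hx).trans_eq hnorm_st
    exact mul_le_mul_of_nonneg_left h2 hMnn
  have hΦdiff : ∀ x ∈ segment ℝ ((s, s) : (Eu d) × (Eu d)) (s, t), DifferentiableAt ℝ Φ x := fun x hx =>
    ((hΦC _ (hXW (hseg hx))).contDiffAt (hWopen.mem_nhds (hXW (hseg hx)))).differentiableAt
      (by norm_num)
  have hfinal : ‖Φ (s, t) - Φ (s, s)‖ ≤ (M * ‖t - s‖) * ‖((s, t) : (Eu d) × (Eu d)) - (s, s)‖ :=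
    (convex_segment _ _).norm_image_sub_le_of_norm_fderiv_le hΦdiff hbound
      (left_mem_segment ℝ _ _) (right_mem_segment ℝ _ _)
  have hΦss : Φ (s, s) = 0 := by
    have : Φ (s, s) = G (s, s) + G (s, s) - 2 * G (s, s) := rfl
    rw [this]; ring
  rw [hΦss, sub_zero, hnorm_st] at hfinal
  have hΦst : Φ (s, t) = g s s + g t t - 2 * g s t := by
    have h1 : Φ (s, t) = G (s, s) + G (t, t) - 2 * G (s, t) := rfl
    rw [h1, hgG s s (hXU ⟨hs, hs⟩), hgG t t (hXU ⟨ht, ht⟩), hgG s t (hXU ⟨hs, ht⟩)]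
  calc g s s + g t t - 2 * g s t = Φ (s, t) := hΦst.symm
    _ ≤ ‖Φ (s, t)‖ := le_abs_self _
    _ ≤ M * ‖t - s‖ * ‖t - s‖ := hfinal
    _ = M * ‖s - t‖ ^ 2 := by rw [norm_sub_rev]; ring
end

section
/- Let n ≥ 1, K_1 > 0, ε > 0 and k ≥ 1. Let 0 ≤ x_1 < x_2 < ⋯ < x_n ≤ 1 and set x_0 = 0, x_{n+1} = 1 and S_i = x_{i+1} − x_i for i = 0, 1, …, n. Assume the spacing condition Σ_{i : S_i > K_1/n} S_i ≤ ε. Let B ⊆ [0,1] be a union of at most k intervals with Lebesgue measure λ(B) ≥ 2ε. Then the number of indices i ∈ {1, …, n} with x_i ∈ B is at least nε/K_1 − 4k − 2. -/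
open MeasureTheory
open scoped Classical in

/-- The design-point counting step in the proof of Lemma 6: under the spacing condition
(Assumption (U) with δ = ε), a subset of `[0,1]` that is a union of at most `k`
intervals and has Lebesgue measure at least `2ε` contains at least `nε/K₁ - 4k - 2`
of the design points `x_1 < ⋯ < x_n`. -/
theorem design_points_in_union_of_intervals
    (n : ℕ) (hn : 1 ≤ n) (K₁ ε : ℝ) (hK₁ : 0 < K₁) (hε : 0 < ε)
    (k : ℕ) (hk : 1 ≤ k)
    (x : ℕ → ℝ) (hx0 : x 0 = 0) (hxn1 : x (n + 1) = 1)
    (hx1 : 0 ≤ x 1) (hxn : x n ≤ 1)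
    (hmono : ∀ i, 1 ≤ i → i < n → x i < x (i + 1))
    (hspace : ∑ i ∈ (Finset.range (n + 1)).filter
        (fun i => K₁ / (n : ℝ) < x (i + 1) - x i), (x (i + 1) - x i) ≤ ε)
    (B : Set ℝ) (hBsub : B ⊆ Set.Icc 0 1)
    (I : Fin k → Set ℝ) (hIconv : ∀ i, Convex ℝ (I i)) (hBI : B = ⋃ i, I i)
    (hBvol : ENNReal.ofReal (2 * ε) ≤ volume B) :
    (n : ℝ) * ε / K₁ - 4 * k - 2 ≤
      ((Finset.Icc 1 n).filter (fun i => x i ∈ B)).card := by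
  have hn0 : (0:ℝ) < n := by exact_mod_cast hn
  -- step monotonicity
  have step : ∀ i, i ≤ n → x i ≤ x (i + 1) := by
    intro i hi
    rcases Nat.eq_zero_or_pos i with h0 | h1
    · subst h0; rw [hx0]; exact hx1
    · rcases eq_or_lt_of_le hi with hn' | hlt
      · subst hn'; rw [hxn1]; exact hxn
      · exact (hmono i h1 hlt).le
  have mono : ∀ a b, a ≤ b → b ≤ n + 1 → x a ≤ x b := by
    intro a b hab hb
    induction b with
    | zero => simp [Nat.le_zero.mp hab]
    | succ m ih =>
      rcases eq_or_lt_of_le hab with h | h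
      · subst h; exact le_refl _
      · exact le_trans (ih (by omega) (by omega)) (step m (by omega))
  -- the set of small gaps meeting B
  set G : Finset ℕ := (Finset.range (n + 1)).filter
    (fun i => ¬ (K₁ / (n : ℝ) < x (i + 1) - x i) ∧
      (B ∩ Set.Ioo (x i) (x (i + 1))).Nonempty) with hGdef
  -- covering
  have cover : B ⊆ ⋃ i ∈ Finset.range (n + 1), (B ∩ Set.Icc (x i) (x (i + 1))) := by
    intro y hy
    have hy01 : y ∈ Set.Icc (0:ℝ) 1 := hBsub hy
    set T : Finset ℕ := (Finset.range (n + 1)).filter (fun i => x i ≤ y) with hT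
    have h0T : 0 ∈ T := by
      simp [hT, Finset.mem_filter, hx0, hy01.1]
    have hTne : T.Nonempty := ⟨0, h0T⟩
    set i := T.max' hTne with hi
    have hiT : i ∈ T := T.max'_mem hTne
    have hin : i < n + 1 := (Finset.mem_filter.mp hiT).1 |> Finset.mem_range.mp
    have hxi : x i ≤ y := (Finset.mem_filter.mp hiT).2
    have hup : y ≤ x (i + 1) := by
      rcases eq_or_lt_of_le (Nat.lt_succ_iff.mp hin) with he | hlt
      · rw [he, hxn1]; exact hy01.2
      · by_contra hcon
        push_neg at hcon
        have : i + 1 ∈ T := by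
          simp only [hT, Finset.mem_filter, Finset.mem_range]
          exact ⟨by omega, hcon.le⟩
        have := T.le_max' _ this
        omega
    exact Set.mem_biUnion (Finset.mem_range.mpr hin) ⟨hy, hxi, hup⟩
  have hvol1 : volume B ≤ ∑ i ∈ Finset.range (n + 1),
      volume (B ∩ Set.Icc (x i) (x (i + 1))) :=
    le_trans (measure_mono cover) (measure_biUnion_finset_le _ _)
  have hKn : (0:ℝ) ≤ K₁ / n := le_of_lt (div_pos hK₁ hn0)
  -- split sum
  have hsplit : ∑ i ∈ Finset.range (n + 1), volume (B ∩ Set.Icc (x i) (x (i + 1)))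
      = (∑ i ∈ (Finset.range (n + 1)).filter (fun i => K₁ / (n : ℝ) < x (i + 1) - x i),
          volume (B ∩ Set.Icc (x i) (x (i + 1))))
      + ∑ i ∈ (Finset.range (n + 1)).filter (fun i => ¬ (K₁ / (n : ℝ) < x (i + 1) - x i)),
          volume (B ∩ Set.Icc (x i) (x (i + 1))) :=
    (Finset.sum_filter_add_sum_filter_not _ _ _).symm
  have hbig : ∑ i ∈ (Finset.range (n + 1)).filter (fun i => K₁ / (n : ℝ) < x (i + 1) - x i),
      volume (B ∩ Set.Icc (x i) (x (i + 1))) ≤ ENNReal.ofReal ε := by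
    calc ∑ i ∈ (Finset.range (n + 1)).filter (fun i => K₁ / (n : ℝ) < x (i + 1) - x i),
        volume (B ∩ Set.Icc (x i) (x (i + 1)))
        ≤ ∑ i ∈ (Finset.range (n + 1)).filter (fun i => K₁ / (n : ℝ) < x (i + 1) - x i),
          ENNReal.ofReal (x (i + 1) - x i) := by
          refine Finset.sum_le_sum fun i _ => ?_
          calc volume (B ∩ Set.Icc (x i) (x (i + 1)))
              ≤ volume (Set.Icc (x i) (x (i + 1))) := measure_mono Set.inter_subset_right
            _ = ENNReal.ofReal (x (i + 1) - x i) := Real.volume_Icc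
      _ = ENNReal.ofReal (∑ i ∈ (Finset.range (n + 1)).filter
            (fun i => K₁ / (n : ℝ) < x (i + 1) - x i), (x (i + 1) - x i)) := by
          rw [ENNReal.ofReal_sum_of_nonneg]
          intro i hi
          have := (Finset.mem_filter.mp hi).2
          linarith
      _ ≤ ENNReal.ofReal ε := ENNReal.ofReal_le_ofReal hspace
  have hGsub : G ⊆ (Finset.range (n + 1)).filter
      (fun i => ¬ (K₁ / (n : ℝ) < x (i + 1) - x i)) := by
    intro i hi
    rw [hGdef, Finset.mem_filter] at hi
    exact Finset.mem_filter.mpr ⟨hi.1, hi.2.1⟩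
  have hsmall : ∑ i ∈ (Finset.range (n + 1)).filter
      (fun i => ¬ (K₁ / (n : ℝ) < x (i + 1) - x i)),
      volume (B ∩ Set.Icc (x i) (x (i + 1)))
      ≤ G.card * ENNReal.ofReal (K₁ / n) := by
    calc ∑ i ∈ (Finset.range (n + 1)).filter (fun i => ¬ (K₁ / (n : ℝ) < x (i + 1) - x i)),
        volume (B ∩ Set.Icc (x i) (x (i + 1)))
        ≤ ∑ i ∈ (Finset.range (n + 1)).filter (fun i => ¬ (K₁ / (n : ℝ) < x (i + 1) - x i)),
          (if i ∈ G then ENNReal.ofReal (K₁ / n) else 0) := by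
          refine Finset.sum_le_sum fun i hi => ?_
          have hsm := (Finset.mem_filter.mp hi).2
          by_cases hiG : i ∈ G
          · rw [if_pos hiG]
            calc volume (B ∩ Set.Icc (x i) (x (i + 1)))
                ≤ volume (Set.Icc (x i) (x (i + 1))) := measure_mono Set.inter_subset_right
              _ = ENNReal.ofReal (x (i + 1) - x i) := Real.volume_Icc
              _ ≤ ENNReal.ofReal (K₁ / n) := ENNReal.ofReal_le_ofReal (not_lt.mp hsm)
          · rw [if_neg hiG]
            have hemp : B ∩ Set.Ioo (x i) (x (i + 1)) = ∅ := by
              by_contra hne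
              exact hiG (Finset.mem_filter.mpr ⟨(Finset.mem_filter.mp hi).1,
                hsm, Set.nonempty_iff_ne_empty.mpr hne⟩)
            have hsub2 : B ∩ Set.Icc (x i) (x (i + 1)) ⊆
                (B ∩ Set.Ioo (x i) (x (i + 1))) ∪ {x i, x (i + 1)} := by
              rintro y ⟨hyB, hy1, hy2⟩
              rcases eq_or_lt_of_le hy1 with h1 | h1
              · exact Or.inr (Or.inl h1.symm)
              rcases eq_or_lt_of_le hy2 with h2 | h2
              · exact Or.inr (Or.inr h2)
              · exact Or.inl ⟨hyB, h1, h2⟩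
            calc volume (B ∩ Set.Icc (x i) (x (i + 1)))
                ≤ volume ((B ∩ Set.Ioo (x i) (x (i + 1))) ∪ {x i, x (i + 1)}) :=
                  measure_mono hsub2
              _ = 0 := by
                  rw [hemp, Set.empty_union]
                  exact ((Set.finite_singleton _).insert _).measure_zero _
              _ ≤ 0 := le_refl _
      _ = ∑ i ∈ ((Finset.range (n + 1)).filter
            (fun i => ¬ (K₁ / (n : ℝ) < x (i + 1) - x i))) ∩ G,
          ENNReal.ofReal (K₁ / n) := Finset.sum_ite_mem _ _ _
      _ = G.card * ENNReal.ofReal (K₁ / n) := by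
          rw [Finset.inter_eq_right.mpr hGsub, Finset.sum_const, nsmul_eq_mul]
  -- conclude |G| ≥ n ε / K₁
  have hvol2 : ENNReal.ofReal ε + ENNReal.ofReal ε ≤
      ENNReal.ofReal ε + G.card * ENNReal.ofReal (K₁ / n) := by
    calc ENNReal.ofReal ε + ENNReal.ofReal ε = ENNReal.ofReal (2 * ε) := by
          rw [two_mul, ENNReal.ofReal_add hε.le hε.le]
      _ ≤ volume B := hBvol
      _ ≤ _ := hvol1
      _ = _ := hsplit
      _ ≤ ENNReal.ofReal ε + G.card * ENNReal.ofReal (K₁ / n) := add_le_add hbig hsmall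
  have hvol3 : ENNReal.ofReal ε ≤ G.card * ENNReal.ofReal (K₁ / n) :=
    (ENNReal.add_le_add_iff_left ENNReal.ofReal_ne_top).mp hvol2
  have hcardR : ε ≤ (G.card : ℝ) * (K₁ / n) := by
    have : (G.card : ENNReal) * ENNReal.ofReal (K₁ / n)
        = ENNReal.ofReal ((G.card : ℝ) * (K₁ / n)) := by
      rw [ENNReal.ofReal_mul (by positivity), ENNReal.ofReal_natCast]
    rw [this] at hvol3
    exact (ENNReal.ofReal_le_ofReal_iff (by positivity)).mp hvol3
  have hGcard : (n : ℝ) * ε / K₁ ≤ G.card := by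
    rw [div_le_iff₀ hK₁]
    have h1 : (n:ℝ) * ε ≤ (n:ℝ) * ((G.card : ℝ) * (K₁ / n)) :=
      mul_le_mul_of_nonneg_left hcardR hn0.le
    calc (n:ℝ) * ε ≤ (n:ℝ) * ((G.card : ℝ) * (K₁ / n)) := h1
      _ = (G.card : ℝ) * K₁ := by field_simp
  -- choose witnesses
  have hGprop : ∀ i : ℕ, ∃ (p : ℝ) (j : Fin k), i ∈ G →
      p ∈ I j ∧ x i < p ∧ p < x (i + 1) := by
    intro i
    by_cases hi : i ∈ G
    · obtain ⟨_, _, hne⟩ := Finset.mem_filter.mp hi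
      obtain ⟨q, hqB, hqlo, hqhi⟩ := hne
      rw [hBI] at hqB
      obtain ⟨j, hj⟩ := Set.mem_iUnion.mp hqB
      exact ⟨q, j, fun _ => ⟨hj, hqlo, hqhi⟩⟩
    · exact ⟨0, ⟨0, hk⟩, fun h => absurd h hi⟩
  choose p j hpj using hGprop
  set filterB := (Finset.Icc 1 n).filter (fun i => x i ∈ B) with hFB
  set Ggood := G.filter (fun i => i < n ∧ x (i + 1) ∈ B) with hGg
  set Gbad := G.filter (fun i => ¬ (i < n ∧ x (i + 1) ∈ B)) with hGb
  have hGsplit : Ggood.card + Gbad.card = G.card :=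
    Finset.card_filter_add_card_filter_not _
  -- good injects into filterB
  have hgood : Ggood.card ≤ filterB.card := by
    apply Finset.card_le_card_of_injOn (fun i => i + 1)
    · intro i hi
      obtain ⟨hiG, hilt, hiB⟩ := Finset.mem_filter.mp hi
      exact Finset.mem_filter.mpr ⟨Finset.mem_Icc.mpr ⟨by dsimp only; omega, by dsimp only; omega⟩, hiB⟩
    · intro a _ b _ h
      simpa using h
  -- bad is small
  have hIB : ∀ m, I m ⊆ B := by
    intro m; rw [hBI]; exact Set.subset_iUnion I m
  have hGle : ∀ i ∈ G, i ≤ n := by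
    intro i hi
    have := Finset.mem_range.mp (Finset.mem_filter.mp hi).1
    omega
  have hkey : ∀ i1 i2, i1 ∈ Gbad.erase n → i2 ∈ Gbad.erase n → i1 < i2 → j i1 ≠ j i2 := by
    intro i1 i2 h1 h2 hlt hje
    obtain ⟨h1n, h1b⟩ := Finset.mem_erase.mp h1
    obtain ⟨h2n, h2b⟩ := Finset.mem_erase.mp h2
    obtain ⟨h1G, h1bad⟩ := Finset.mem_filter.mp h1b
    obtain ⟨h2G, _⟩ := Finset.mem_filter.mp h2b
    have hi1n : i1 < n := lt_of_le_of_ne (hGle _ h1G) h1n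
    have hxB : x (i1 + 1) ∉ B := fun hB => h1bad ⟨hi1n, hB⟩
    obtain ⟨hp1, hlo1, hhi1⟩ := hpj i1 h1G
    obtain ⟨hp2, hlo2, _⟩ := hpj i2 h2G
    rw [← hje] at hp2
    have hx12 : x (i1 + 1) ≤ x i2 := mono (i1 + 1) i2 (by omega) (by
      have := hGle _ h2G; omega)
    have hmem : x (i1 + 1) ∈ I (j i1) :=
      (hIconv (j i1)).ordConnected.out hp1 hp2 ⟨hhi1.le, by linarith⟩
    exact hxB (hIB _ hmem)
  have hbadcard : (Gbad.erase n).card ≤ k := by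
    have := Finset.card_le_card_of_injOn j
      (fun i _ => Finset.mem_univ (j i))
      (s := Gbad.erase n) (t := (Finset.univ : Finset (Fin k)))
      (by
        intro a ha b hb hab
        by_contra hne
        rcases lt_or_gt_of_ne hne with h | h
        · exact hkey a b ha hb h hab
        · exact hkey b a hb ha h hab.symm)
    simpa using this
  have hGbad : Gbad.card ≤ k + 1 := by
    have hsub : Gbad ⊆ insert n (Gbad.erase n) := by
      intro i hi
      by_cases h : i = n
      · exact Finset.mem_insert.mpr (Or.inl h)
      · exact Finset.mem_insert.mpr (Or.inr (Finset.mem_erase.mpr ⟨h, hi⟩))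
    calc Gbad.card ≤ (insert n (Gbad.erase n)).card := Finset.card_le_card hsub
      _ ≤ (Gbad.erase n).card + 1 := Finset.card_insert_le _ _
      _ ≤ k + 1 := by omega
  have hfinal : G.card ≤ filterB.card + k + 1 := by omega
  have hfinalR : (G.card : ℝ) ≤ (filterB.card : ℝ) + k + 1 := by exact_mod_cast hfinal
  have hkR : (1:ℝ) ≤ k := by exact_mod_cast hk
  linarith
end

section
/- For every ε with 0 < ε < 1 and every K_1 > 0 there exist γ > 0 and a positive integer N such that the following holds for all n ≥ N. Let 0 ≤ x_1 < x_2 < ⋯ < x_n ≤ 1 and set x_0 = 0, x_{n+1} = 1; assume the spacing condition Σ_{i : x_{i+1}−x_i > K_1/n} (x_{i+1} − x_i) ≤ ε. Let p, p_0 : [0,1] → [0,1] be twice continuously differentiable functions with sup_{x∈[0,1]} |p'(x)| ≤ γn, sup_{x∈[0,1]} |p''(x)| ≤ γn, sup_{x∈[0,1]} |p_0'(x)| ≤ γn and sup_{x∈[0,1]} |p_0''(x)| ≤ γn. If ∫_0^1 |p(x) − p_0(x)| dx > 5ε, then the number of indices i ∈ {1, …, n} with |p(x_i) − p_0(x_i)|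 > ε is at least nε/(4K_1). -/
open MeasureTheory
open scoped Classical in
/-- Lemma 6 (with the derivative bounds of the sieve Θ_{n,2} made explicit): if two
`[0,1]`-valued C² response probability functions with derivative bounds `γn` are
L¹-separated by more than `5ε`, then under the spacing condition (Assumption (U) with
δ = ε) they differ by more than `ε` at at least `nε/(4K₁)` design points. -/
theorem l1_separation_implies_many_separated_design_points
    (ε K₁ : ℝ) (hε : 0 < ε) (hε1 : ε < 1) (hK₁ : 0 < K₁) :
    ∃ γ : ℝ, 0 < γ ∧ ∃ N : ℕ, ∀ n : ℕ, N ≤ n →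
      ∀ x : ℕ → ℝ, x 0 = 0 → x (n + 1) = 1 → 0 ≤ x 1 → x n ≤ 1 →
      (∀ i, 1 ≤ i → i < n → x i < x (i + 1)) →
      (∑ i ∈ (Finset.range (n + 1)).filter
          (fun i => K₁ / (n : ℝ) < x (i + 1) - x i), (x (i + 1) - x i) ≤ ε) →
      ∀ p p₀ : ℝ → ℝ,
      ContDiffOn ℝ 2 p (Set.Icc 0 1) → ContDiffOn ℝ 2 p₀ (Set.Icc 0 1) →
      (∀ t ∈ Set.Icc (0 : ℝ) 1, p t ∈ Set.Icc (0 : ℝ) 1) →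
      (∀ t ∈ Set.Icc (0 : ℝ) 1, p₀ t ∈ Set.Icc (0 : ℝ) 1) →
      (∀ t ∈ Set.Icc (0 : ℝ) 1, |derivWithin p (Set.Icc 0 1) t| ≤ γ * n) →
      (∀ t ∈ Set.Icc (0 : ℝ) 1, |iteratedDerivWithin 2 p (Set.Icc 0 1) t| ≤ γ * n) →
      (∀ t ∈ Set.Icc (0 : ℝ) 1, |derivWithin p₀ (Set.Icc 0 1) t| ≤ γ * n) →
      (∀ t ∈ Set.Icc (0 : ℝ) 1, |iteratedDerivWithin 2 p₀ (Set.Icc 0 1) t| ≤ γ * n) →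
      (5 * ε < ∫ t in (0 : ℝ)..1, |p t - p₀ t|) →
      (n : ℝ) * ε / (4 * K₁) ≤
        ((Finset.Icc 1 n).filter (fun i => ε < |p (x i) - p₀ (x i)|)).card := by
  refine ⟨ε / (2 * K₁), by positivity, 1, ?_⟩
  intro n hn x hx0 hxn1 hx1 hxn hlt hspace p p₀ hp hp₀ hpmem hp₀mem hp' _ hp₀' _ hint
  set γ : ℝ := ε / (2 * K₁) with hγ
  have hn0 : 0 < n := hn
  have hnR : (0 : ℝ) < n := by exact_mod_cast hn0
  -- step monotonicity
  have hm : ∀ i, i ≤ n → x i ≤ x (i + 1) := by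
    intro i hi
    rcases Nat.eq_zero_or_pos i with h0 | h1
    · rw [h0, hx0]; exact hx1
    · rcases eq_or_lt_of_le hi with he | hl
      · rw [he, hxn1]; exact hxn
      · exact (hlt i h1 hl).le
  have hmle : ∀ i j : ℕ, i ≤ j → j ≤ n + 1 → x i ≤ x j := by
    intro i j hij hj
    induction j with
    | zero => interval_cases i; exact le_rfl
    | succ k ih =>
      rcases Nat.lt_succ_iff_lt_or_eq.mp (Nat.lt_succ_of_le hij) with h | h
      · exact le_trans (ih (Nat.lt_succ_iff.mp h) (le_trans (Nat.le_succ k) hj))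
          (hm k (Nat.succ_le_succ_iff.mp hj))
      · rw [h]
  have hmem : ∀ i, i ≤ n + 1 → x i ∈ Set.Icc (0 : ℝ) 1 := by
    intro i hi
    constructor
    · rw [← hx0]; exact hmle 0 i (Nat.zero_le _) hi
    · rw [← hxn1]; exact hmle i (n + 1) hi le_rfl
  have hg0 : ∀ i, i ≤ n → (0 : ℝ) ≤ x (i + 1) - x i := fun i hi => sub_nonneg.mpr (hm i hi)
  -- continuity and boundedness of |p - p₀|
  have hcont : ContinuousOn (fun t => |p t - p₀ t|) (Set.Icc (0 : ℝ) 1) :=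
    ((hp.continuousOn.sub hp₀.continuousOn).abs)
  have hb1 : ∀ t ∈ Set.Icc (0 : ℝ) 1, |p t - p₀ t| ≤ 1 := by
    intro t ht
    have h1 := hpmem t ht; have h2 := hp₀mem t ht
    rw [Set.mem_Icc] at h1 h2
    rw [abs_le]; constructor <;> linarith
  -- Lipschitz-type bound
  have hlip : ∀ s ∈ Set.Icc (0 : ℝ) 1, ∀ t ∈ Set.Icc (0 : ℝ) 1,
      |p s - p₀ s - (p t - p₀ t)| ≤ 2 * (γ * n) * |s - t| := by
    intro s hs t ht
    have key : ∀ q : ℝ → ℝ, ContDiffOn ℝ 2 q (Set.Icc (0 : ℝ) 1) →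
        (∀ u ∈ Set.Icc (0 : ℝ) 1, |derivWithin q (Set.Icc 0 1) u| ≤ γ * n) →
        |q s - q t| ≤ γ * n * |s - t| := by
      intro q hq hq'
      have := (convex_Icc (0:ℝ) 1).norm_image_sub_le_of_norm_derivWithin_le
        (hq.differentiableOn (by norm_num)) (fun u hu => by
          rw [Real.norm_eq_abs]; exact hq' u hu) ht hs
      simpa [Real.norm_eq_abs] using this
    have h1 := key p hp hp'
    have h2 := key p₀ hp₀ hp₀'
    calc |p s - p₀ s - (p t - p₀ t)| = |(p s - p t) - (p₀ s - p₀ t)| := by ring_nf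
      _ ≤ |p s - p t| + |p₀ s - p₀ t| := abs_sub _ _
      _ ≤ γ * n * |s - t| + γ * n * |s - t| := add_le_add h1 h2
      _ = 2 * (γ * n) * |s - t| := by ring
  -- integrability and decomposition of the integral
  have hii : ∀ k < n + 1, IntervalIntegrable (fun t => |p t - p₀ t|) volume (x k) (x (k + 1)) := by
    intro k hk
    apply ContinuousOn.intervalIntegrable
    apply hcont.mono
    rw [Set.uIcc_of_le (hm k (Nat.lt_succ_iff.mp hk))]
    exact Set.Icc_subset_Icc (hmem k (by omega)).1 (hmem (k + 1) (by omega)).2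
  have hsum : ∑ i ∈ Finset.range (n + 1), ∫ t in (x i)..(x (i + 1)), |p t - p₀ t|
      = ∫ t in (0 : ℝ)..1, |p t - p₀ t| := by
    rw [intervalIntegral.sum_integral_adjacent_intervals hii, hx0, hxn1]
  -- the coefficient function
  set C : ℕ → ℝ := fun i =>
    if K₁ / (n : ℝ) < x (i + 1) - x i then 1
    else if ε < |p (x (max i 1)) - p₀ (x (max i 1))| then 1 else 2 * ε with hC
  -- per-interval bound
  have hbound : ∀ i ∈ Finset.range (n + 1),
      (∫ t in (x i)..(x (i + 1)), |p t - p₀ t|) ≤ C i * (x (i + 1) - x i) := by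
    intro i hi
    rw [Finset.mem_range, Nat.lt_succ_iff] at hi
    have hsub : Set.uIoc (x i) (x (i + 1)) ⊆ Set.Icc (0 : ℝ) 1 := by
      rw [Set.uIoc_of_le (hm i hi)]
      exact (Set.Ioc_subset_Icc_self).trans
        (Set.Icc_subset_Icc (hmem i (by omega)).1 (hmem (i + 1) (by omega)).2)
    have habs : ∀ D : ℝ, (∀ t ∈ Set.uIoc (x i) (x (i + 1)), |p t - p₀ t| ≤ D) →
        (∫ t in (x i)..(x (i + 1)), |p t - p₀ t|) ≤ D * (x (i + 1) - x i) := by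
      intro D hD
      have := intervalIntegral.norm_integral_le_of_norm_le_const
        (f := fun t => |p t - p₀ t|) (C := D) (a := x i) (b := x (i + 1)) (by
          intro t ht; rw [Real.norm_eq_abs, abs_abs]; exact hD t ht)
      calc (∫ t in (x i)..(x (i + 1)), |p t - p₀ t|)
          ≤ ‖∫ t in (x i)..(x (i + 1)), |p t - p₀ t|‖ := le_abs_self _
        _ ≤ D * |x (i + 1) - x i| := this
        _ = D * (x (i + 1) - x i) := by rw [abs_of_nonneg (hg0 i hi)]
    simp only [hC]
    split_ifs with h1 h2
    · exact habs 1 (fun t ht => hb1 t (hsub ht))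
    · exact habs 1 (fun t ht => hb1 t (hsub ht))
    · -- small gap, non-separated at the design point x (max i 1)
      push_neg at h1 h2
      apply habs
      intro t ht
      have htI : t ∈ Set.Icc (x i) (x (i + 1)) := by
        rw [Set.uIoc_of_le (hm i hi)] at ht; exact Set.Ioc_subset_Icc_self ht
      have hjI : x (max i 1) ∈ Set.Icc (x i) (x (i + 1)) := by
        rcases Nat.eq_zero_or_pos i with h0 | hpos
        · subst h0
          have he : max 0 1 = 1 := rfl
          rw [he]
          exact ⟨hm 0 (by omega), le_rfl⟩
        · rw [Nat.max_eq_left hpos]; exact ⟨le_rfl, hm i hi⟩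
      have hdist : |t - x (max i 1)| ≤ K₁ / n := by
        rw [abs_le]
        constructor <;> [linarith [htI.1, hjI.2]; linarith [htI.2, hjI.1]]
      have hLip := hlip t (hsub ht) (x (max i 1))
        (Set.Icc_subset_Icc (hmem i (by omega)).1 (hmem (i + 1) (by omega)).2 hjI)
      have h3 : 2 * (γ * n) * |t - x (max i 1)| ≤ ε := by
        have : 2 * (γ * n) * |t - x (max i 1)| ≤ 2 * (γ * n) * (K₁ / n) := by
          apply mul_le_mul_of_nonneg_left hdist; positivity
        have heq : 2 * (γ * n) * (K₁ / n) = ε := by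
          rw [hγ]; field_simp
        linarith
      calc |p t - p₀ t| ≤ |p (x (max i 1)) - p₀ (x (max i 1))|
            + |p t - p₀ t - (p (x (max i 1)) - p₀ (x (max i 1)))| := by
            have := abs_add_le (p (x (max i 1)) - p₀ (x (max i 1)))
              (p t - p₀ t - (p (x (max i 1)) - p₀ (x (max i 1))))
            simpa using this
        _ ≤ ε + ε := add_le_add h2 (le_trans hLip h3)
        _ = 2 * ε := by ring
  have hIle : (5 : ℝ) * ε < ∑ i ∈ Finset.range (n + 1), C i * (x (i + 1) - x i) :=
    lt_of_lt_of_le hint (hsum ▸ Finset.sum_le_sum hbound)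
  -- split the sum
  set S := (Finset.Icc 1 n).filter (fun i => ε < |p (x i) - p₀ (x i)|) with hS
  set R := Finset.range (n + 1) with hR
  have hsplit : ∑ i ∈ R, C i * (x (i + 1) - x i)
      = (∑ i ∈ R.filter (fun i => K₁ / (n : ℝ) < x (i + 1) - x i), C i * (x (i + 1) - x i))
      + ∑ i ∈ R.filter (fun i => ¬ K₁ / (n : ℝ) < x (i + 1) - x i), C i * (x (i + 1) - x i) :=
    (Finset.sum_filter_add_sum_filter_not R _ _).symm
  -- big gaps: C = 1, total ≤ ε
  have hbig : ∑ i ∈ R.filter (fun i => K₁ / (n : ℝ) < x (i + 1) - x i),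
      C i * (x (i + 1) - x i) ≤ ε := by
    refine le_trans (le_of_eq (Finset.sum_congr rfl ?_)) hspace
    intro i hi
    rw [Finset.mem_filter] at hi
    simp only [hC]; simp only [if_pos hi.2, one_mul]
  -- small gaps: split by separation
  have hsmall : ∑ i ∈ R.filter (fun i => ¬ K₁ / (n : ℝ) < x (i + 1) - x i),
      C i * (x (i + 1) - x i)
      = (∑ i ∈ (R.filter (fun i => ¬ K₁ / (n : ℝ) < x (i + 1) - x i)).filter
          (fun i => ε < |p (x (max i 1)) - p₀ (x (max i 1))|), C i * (x (i + 1) - x i))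
      + ∑ i ∈ (R.filter (fun i => ¬ K₁ / (n : ℝ) < x (i + 1) - x i)).filter
          (fun i => ¬ ε < |p (x (max i 1)) - p₀ (x (max i 1))|), C i * (x (i + 1) - x i) :=
    (Finset.sum_filter_add_sum_filter_not _ _ _).symm
  set T := (R.filter (fun i => ¬ K₁ / (n : ℝ) < x (i + 1) - x i)).filter
      (fun i => ε < |p (x (max i 1)) - p₀ (x (max i 1))|) with hT
  -- card T ≤ 2 * card S
  have hTS : T.card ≤ 2 * S.card := by
    apply Finset.card_le_mul_card_image_of_maps_to (f := fun i => max i 1)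
    · intro i hi
      rw [hT, Finset.mem_filter, Finset.mem_filter, hR, Finset.mem_range] at hi
      rw [hS, Finset.mem_filter, Finset.mem_Icc]
      exact ⟨⟨le_max_right _ _, by omega⟩, hi.2⟩
    · intro j hj
      have : T.filter (fun i => max i 1 = j) ⊆ {0, j} := by
        intro i hi
        rw [Finset.mem_filter] at hi
        rcases Nat.eq_zero_or_pos i with h0 | hpos
        · simp [h0]
        · have : max i 1 = i := Nat.max_eq_left hpos
          rw [this] at hi
          simp [hi.2]
      calc (T.filter (fun i => max i 1 = j)).card ≤ ({0, j} : Finset ℕ).card :=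
            Finset.card_le_card this
        _ ≤ 2 := Finset.card_insert_le _ _ |>.trans (by simp)
  -- separated small gaps: each gap ≤ K₁/n, C = 1
  have hsep : ∑ i ∈ T, C i * (x (i + 1) - x i) ≤ 2 * S.card * (K₁ / n) := by
    have : ∑ i ∈ T, C i * (x (i + 1) - x i) ≤ ∑ _i ∈ T, K₁ / n := by
      apply Finset.sum_le_sum
      intro i hi
      rw [hT, Finset.mem_filter, Finset.mem_filter] at hi
      simp only [hC]; simp only [if_neg hi.1.2, if_pos hi.2, one_mul]
      exact not_lt.mp hi.1.2
    rw [Finset.sum_const, nsmul_eq_mul] at this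
    refine this.trans ?_
    have : (T.card : ℝ) ≤ 2 * S.card := by exact_mod_cast hTS
    apply mul_le_mul_of_nonneg_right this (by positivity)
  -- non-separated small gaps: C = 2ε, total ≤ 2ε
  have hnonsep : ∑ i ∈ (R.filter (fun i => ¬ K₁ / (n : ℝ) < x (i + 1) - x i)).filter
      (fun i => ¬ ε < |p (x (max i 1)) - p₀ (x (max i 1))|), C i * (x (i + 1) - x i)
      ≤ 2 * ε := by
    have h1 : ∀ i ∈ (R.filter (fun i => ¬ K₁ / (n : ℝ) < x (i + 1) - x i)).filter
        (fun i => ¬ ε < |p (x (max i 1)) - p₀ (x (max i 1))|),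
        C i * (x (i + 1) - x i) = 2 * ε * (x (i + 1) - x i) := by
      intro i hi
      rw [Finset.mem_filter, Finset.mem_filter] at hi
      simp only [hC]; simp only [if_neg hi.1.2, if_neg hi.2]
    rw [Finset.sum_congr rfl h1, ← Finset.mul_sum]
    have h2 : ∑ i ∈ (R.filter (fun i => ¬ K₁ / (n : ℝ) < x (i + 1) - x i)).filter
        (fun i => ¬ ε < |p (x (max i 1)) - p₀ (x (max i 1))|), (x (i + 1) - x i)
        ≤ ∑ i ∈ R, (x (i + 1) - x i) := by
      apply Finset.sum_le_sum_of_subset_of_nonneg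
      · exact (Finset.filter_subset _ _).trans (Finset.filter_subset _ _)
      · intro i hi _
        rw [hR, Finset.mem_range, Nat.lt_succ_iff] at hi
        exact hg0 i hi
    have h3 : ∑ i ∈ R, (x (i + 1) - x i) = 1 := by
      rw [hR, Finset.sum_range_sub, hx0, hxn1, sub_zero]
    nlinarith
  -- put it together
  have hfinal : 5 * ε < ε + 2 * S.card * (K₁ / n) + 2 * ε := by
    rw [hsplit, hsmall] at hIle
    linarith
  have hScard : (0 : ℝ) ≤ S.card := Nat.cast_nonneg _
  rw [div_le_iff₀ (by positivity)]
  have h4 : ε * n < 2 * S.card * K₁ := by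
    have := hfinal
    have h5 : 2 * ε < 2 * S.card * (K₁ / n) := by linarith
    calc ε * n = (2 * ε) / 2 * n := by ring
      _ < (2 * S.card * (K₁ / n)) / 2 * n := by
          apply mul_lt_mul_of_pos_right _ hnR
          linarith
      _ = 2 * S.card * K₁ / 2 := by field_simp
      _ ≤ 2 * S.card * K₁ := by nlinarith
  nlinarith
end
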